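/- arXiv:1705.07541 — 4 statements merged into one kernel-verified Lean document; each statement's English description precedes it below -/
import Mathlib

section
/- Suppose a complementary loss L̄ satisfies Σ_{ȳ=1}^K L̄(f(x),ȳ) = M₁ for all x (a constant). Then for any joint distribution p over (x,y) with complementary distribution p̄(x,ȳ) = (1/(K−1)) Σ_{y≠ȳ} p(x,y), (K−1)·E_{p̄}[L̄(f(x),ȳ)] = M₁ − E_p[L̄(f(x),y)]. -/
/-!
Multiplying by `K - 1` cancels the normalisation of `p̄`, and the sum over `y ≠ ȳ` is the full
sum minus the diagonal term. Exchanging the two label sums in the full part turns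
`Σ_ȳ L̄(f(x), ȳ)` into the constant `M₁`, which integrates against `p` to `M₁`; the diagonal
part is `E_p[L̄(f(x), y)]`.
-/

open MeasureTheory Finset

section

variable {X ι : Type*} [MeasurableSpace X] {ν : Measure X} [Fintype ι]

lemma sum_integral_mul_sum_ne [DecidableEq ι] (ℓ p : X → ι → ℝ)
    (hint : ∀ i j, Integrable (fun x => ℓ x i * p x j) ν) :
    ∑ i, ∫ x, ℓ x i * ∑ j ∈ univ.filter (fun j => j ≠ i), p x j ∂ν
      = ∑ i, ∑ j, ∫ x, ℓ x i * p x j ∂ν - ∑ i, ∫ x, ℓ x i * p x i ∂ν := by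
  rw [← sum_sub_distrib]
  refine sum_congr rfl fun i _ => ?_
  simp_rw [filter_ne', sum_erase_eq_sub (mem_univ i), mul_sub, mul_sum]
  rw [integral_sub (integrable_finsetSum _ fun j _ => hint i j) (hint i i),
    integral_finsetSum _ fun j _ => hint i j]

lemma sum_sum_integral_mul_of_sum_eq {ℓ : X → ι → ℝ} {c : ℝ} (p : X → ι → ℝ)
    (hsum : ∀ x, ∑ i, ℓ x i = c) (hint : ∀ i j, Integrable (fun x => ℓ x i * p x j) ν) :
    ∑ i, ∑ j, ∫ x, ℓ x i * p x j ∂ν = c * ∑ j, ∫ x, p x j ∂ν := by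
  rw [sum_comm, mul_sum]
  refine sum_congr rfl fun j _ => ?_
  rw [← integral_finsetSum _ fun i _ => hint i j, ← integral_const_mul]
  simp_rw [← sum_mul, hsum]

end

theorem complementary_expectation_identity_general
    {X Y : Type*} [MeasurableSpace X] (ν : Measure X)
    (K : ℕ) (hK : 2 ≤ K)
    (f : X → Y) (Lbar : Y → Fin K → ℝ) (M₁ : ℝ)
    (p : X → Fin K → ℝ)
    (hprob : ∑ y : Fin K, ∫ x, p x y ∂ν = 1)
    (hint : ∀ yb y : Fin K, Integrable (fun x => Lbar (f x) yb * p x y) ν)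
    (hM₁ : ∀ x, ∑ yb : Fin K, Lbar (f x) yb = M₁) :
    ((K : ℝ) - 1) *
        ∑ yb : Fin K, ∫ x,
          Lbar (f x) yb *
            ((1 / ((K : ℝ) - 1)) * ∑ y ∈ Finset.univ.filter (fun y => y ≠ yb), p x y) ∂ν
      = M₁ - ∑ y : Fin K, ∫ x, Lbar (f x) y * p x y ∂ν := by
  have hK₁ : ((K : ℝ) - 1) ≠ 0 := by
    have : (2 : ℝ) ≤ K := by exact_mod_cast hK
    linarith
  calc ((K : ℝ) - 1) * ∑ yb : Fin K, ∫ x, Lbar (f x) yb *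
          ((1 / ((K : ℝ) - 1)) * ∑ y ∈ univ.filter (fun y => y ≠ yb), p x y) ∂ν
      = ∑ yb : Fin K, ∫ x, Lbar (f x) yb * ∑ y ∈ univ.filter (fun y => y ≠ yb), p x y ∂ν := by
        simp_rw [mul_left_comm _ (1 / ((K : ℝ) - 1)), integral_const_mul, ← mul_sum, ← mul_assoc,
          mul_one_div_cancel hK₁, one_mul]
    _ = ∑ yb, ∑ y, ∫ x, Lbar (f x) yb * p x y ∂ν - ∑ y, ∫ x, Lbar (f x) y * p x y ∂ν :=
        sum_integral_mul_sum_ne (fun x => Lbar (f x)) p hint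
    _ = M₁ - ∑ y, ∫ x, Lbar (f x) y * p x y ∂ν := by
        rw [sum_sum_integral_mul_of_sum_eq p hM₁ hint, hprob, mul_one]

/-- If the complementary loss sums to a constant `M₁` over all labels, then
`(K−1)·E_{p̄}[L̄(f(x),ȳ)] = M₁ − E_p[L̄(f(x),y)]`.  Distributions are represented by
densities `p x y` with respect to a base measure `ν` on `X`, and
`p̄(x,ȳ) = (1/(K−1)) Σ_{y≠ȳ} p(x,y)`. -/
theorem complementary_expectation_identity
    {X Y : Type*} [MeasurableSpace X] (ν : Measure X)
    (K : ℕ) (hK : 2 ≤ K)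
    (f : X → Y) (Lbar : Y → Fin K → ℝ) (M₁ : ℝ)
    (p : X → Fin K → ℝ)
    (hp : ∀ x y, 0 ≤ p x y)
    (hprob : ∑ y : Fin K, ∫ x, p x y ∂ν = 1)
    (hint : ∀ yb y : Fin K, Integrable (fun x => Lbar (f x) yb * p x y) ν)
    (hM₁ : ∀ x, ∑ yb : Fin K, Lbar (f x) yb = M₁) :
    ((K : ℝ) - 1) *
        ∑ yb : Fin K, ∫ x,
          Lbar (f x) yb *
            ((1 / ((K : ℝ) - 1)) * ∑ y ∈ Finset.univ.filter (fun y => y ≠ yb), p x y) ∂ν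
      = M₁ - ∑ y : Fin K, ∫ x, Lbar (f x) y * p x y ∂ν :=
  complementary_expectation_identity_general ν K hK f Lbar M₁ p hprob hint hM₁
end

section
/- Let L and L̄ be losses such that Σ_{ȳ=1}^K L̄(f(x),ȳ) = M₁ and L̄(f(x),y) + L(f(x),y) = M₂ for all x and y, for constants M₁, M₂ ≥ 0. Then the classification risk satisfies R(f) := E_{p(x,y)}[L(f(x),y)] = (K−1)·E_{p̄(x,ȳ)}[L̄(f(x),ȳ)] − M₁ + M₂, where p̄(x,ȳ) = (1/(K−1)) Σ_{y≠ȳ} p(x,y). -/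
/-!
Pointwise in `x`, the condition `L̄ + L = M₂` turns the risk density `∑ᵧ L(y) p(y)` into
`M₂ ∑ᵧ p(y) − ∑ᵧ L̄(y) p(y)`, while `∑_ȳ L̄(ȳ) = M₁` turns the off-diagonal sum
`∑_ȳ L̄(ȳ) ∑_{y ≠ ȳ} p(y)` into `M₁ ∑ᵧ p(y) − ∑ᵧ L̄(y) p(y)`. Eliminating the diagonal term and
integrating, with `∫ ∑ᵧ p(y) = 1`, gives the identity; the factor `K − 1` only cancels the
normalisation of `p̄`.
-/

open MeasureTheory Finset

section OffDiagonal

variable {ι R : Type*} [Fintype ι] [DecidableEq ι] [CommRing R]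

theorem sum_mul_sum_filter_ne (a b : ι → R) :
    ∑ j, a j * ∑ i ∈ univ.filter (· ≠ j), b i = (∑ j, a j) * ∑ i, b i - ∑ i, a i * b i := by
  simp only [filter_ne', sum_erase_eq_sub (mem_univ _), mul_sub, sum_sub_distrib, sum_mul]

theorem sum_mul_eq_sum_mul_sum_filter_ne (ℓ ℓbar p : ι → R) (M₁ M₂ : R)
    (hM₁ : ∑ j, ℓbar j = M₁) (hM₂ : ∀ i, ℓbar i + ℓ i = M₂) :
    ∑ i, ℓ i * p i
      = ∑ j, ℓbar j * ∑ i ∈ univ.filter (· ≠ j), p i - ∑ i, M₁ * p i + ∑ i, M₂ * p i := by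
  have hℓ : ∀ i, ℓ i * p i = M₂ * p i - ℓbar i * p i := fun i => by
    rw [← hM₂ i]; ring
  simp only [sum_mul_sum_filter_ne, hM₁, hℓ, sum_sub_distrib, ← mul_sum]
  ring

end OffDiagonal

section Integral

variable {X ι : Type*} [MeasurableSpace X] {ν : Measure X} [Fintype ι] [DecidableEq ι]

theorem sum_integral_mul_eq_sum_integral_mul_sum_filter_ne (ℓ ℓbar p : X → ι → ℝ) (M₁ M₂ : ℝ)
    (hprob : ∑ i, ∫ x, p x i ∂ν = 1)
    (hint : ∀ i, Integrable (fun x => ℓ x i * p x i) ν)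
    (hintbar : ∀ j i, Integrable (fun x => ℓbar x j * p x i) ν)
    (hM₁ : ∀ x, ∑ j, ℓbar x j = M₁) (hM₂ : ∀ x i, ℓbar x i + ℓ x i = M₂) :
    ∑ i, ∫ x, ℓ x i * p x i ∂ν
      = ∑ j, ∫ x, ℓbar x j * ∑ i ∈ univ.filter (· ≠ j), p x i ∂ν - M₁ + M₂ := by
  have hint₁ : ∀ i, Integrable (fun x => M₁ * p x i) ν := fun i =>
    (integrable_finsetSum univ fun j _ => hintbar j i).congr
      (ae_of_all _ fun x => by simp only [← sum_mul, hM₁])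
  have hint₂ : ∀ i, Integrable (fun x => M₂ * p x i) ν := fun i =>
    ((hintbar i i).add (hint i)).congr
      (ae_of_all _ fun x => by simp only [Pi.add_apply, ← add_mul, hM₂])
  have hintOff : ∀ j, Integrable (fun x => ℓbar x j * ∑ i ∈ univ.filter (· ≠ j), p x i) ν :=
    fun j => by
      simp_rw [mul_sum]
      exact integrable_finsetSum _ fun i _ => hintbar j i
  have hmass : ∀ M : ℝ, ∑ i, ∫ x, M * p x i ∂ν = M := fun M => by
    simp_rw [integral_const_mul, ← mul_sum, hprob, mul_one]
  calc ∑ i, ∫ x, ℓ x i * p x i ∂ν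
      = ∫ x, ∑ i, ℓ x i * p x i ∂ν := (integral_finsetSum _ fun i _ => hint i).symm
    _ = ∫ x, (∑ j, ℓbar x j * ∑ i ∈ univ.filter (· ≠ j), p x i
          - ∑ i, M₁ * p x i + ∑ i, M₂ * p x i) ∂ν := by
        simp_rw [sum_mul_eq_sum_mul_sum_filter_ne _ _ _ M₁ M₂ (hM₁ _) (hM₂ _)]
    _ = ∑ j, ∫ x, ℓbar x j * ∑ i ∈ univ.filter (· ≠ j), p x i ∂ν
          - ∑ i, ∫ x, M₁ * p x i ∂ν + ∑ i, ∫ x, M₂ * p x i ∂ν := by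
        have hOff := integrable_finsetSum univ fun j _ => hintOff j
        have h₁ := integrable_finsetSum univ fun i _ => hint₁ i
        have h₂ := integrable_finsetSum univ fun i _ => hint₂ i
        have hOff₁ : Integrable (fun x => ∑ j, ℓbar x j * ∑ i ∈ univ.filter (· ≠ j), p x i
            - ∑ i, M₁ * p x i) ν := hOff.sub h₁
        rw [integral_add hOff₁ h₂, integral_sub hOff h₁, integral_finsetSum _ fun j _ => hintOff j,
          integral_finsetSum _ fun i _ => hint₁ i, integral_finsetSum _ fun i _ => hint₂ i]
    _ = _ := by rw [hmass, hmass]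

end Integral

theorem risk_from_complementary_labels_general
    {X Y : Type*} [MeasurableSpace X] (ν : Measure X)
    (K : ℕ) (hK : 2 ≤ K)
    (f : X → Y) (L Lbar : Y → Fin K → ℝ) (M₁ M₂ : ℝ)
    (p : X → Fin K → ℝ)
    (hprob : ∑ y : Fin K, ∫ x, p x y ∂ν = 1)
    (hintL : ∀ y : Fin K, Integrable (fun x => L (f x) y * p x y) ν)
    (hintLbar : ∀ yb y : Fin K, Integrable (fun x => Lbar (f x) yb * p x y) ν)
    (hM₁ : ∀ x, ∑ yb : Fin K, Lbar (f x) yb = M₁)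
    (hM₂ : ∀ x (y : Fin K), Lbar (f x) y + L (f x) y = M₂) :
    ∑ y : Fin K, ∫ x, L (f x) y * p x y ∂ν
      = ((K : ℝ) - 1) *
          (∑ yb : Fin K, ∫ x,
            Lbar (f x) yb *
              ((1 / ((K : ℝ) - 1)) * ∑ y ∈ Finset.univ.filter (fun y => y ≠ yb), p x y) ∂ν)
        - M₁ + M₂ := by
  have hK₁ : (K : ℝ) - 1 ≠ 0 := by
    have : (2 : ℝ) ≤ K := by exact_mod_cast hK
    linarith
  simp_rw [mul_left_comm (Lbar _ _), integral_const_mul, ← mul_sum, ← mul_assoc,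
    mul_one_div_cancel hK₁, one_mul]
  exact sum_integral_mul_eq_sum_integral_mul_sum_filter_ne (fun x => L (f x)) (fun x => Lbar (f x))
    p M₁ M₂ hprob hintL hintLbar hM₁ hM₂

/-- Theorem 1 of "Learning from Complementary Labels": under the two symmetry conditions,
the classification risk satisfies
`R(f) = (K−1)·E_{p̄}[L̄(f(x),ȳ)] − M₁ + M₂`, where
`p̄(x,ȳ) = (1/(K−1)) Σ_{y≠ȳ} p(x,y)`. -/
theorem risk_from_complementary_labels
    {X Y : Type*} [MeasurableSpace X] (ν : Measure X)
    (K : ℕ) (hK : 2 ≤ K)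
    (f : X → Y) (L Lbar : Y → Fin K → ℝ) (M₁ M₂ : ℝ)
    (hM₁0 : 0 ≤ M₁) (hM₂0 : 0 ≤ M₂)
    (p : X → Fin K → ℝ)
    (hp : ∀ x y, 0 ≤ p x y)
    (hprob : ∑ y : Fin K, ∫ x, p x y ∂ν = 1)
    (hintL : ∀ y : Fin K, Integrable (fun x => L (f x) y * p x y) ν)
    (hintLbar : ∀ yb y : Fin K, Integrable (fun x => Lbar (f x) yb * p x y) ν)
    (hM₁ : ∀ x, ∑ yb : Fin K, Lbar (f x) yb = M₁)
    (hM₂ : ∀ x (y : Fin K), Lbar (f x) y + L (f x) y = M₂) :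
    ∑ y : Fin K, ∫ x, L (f x) y * p x y ∂ν
      = ((K : ℝ) - 1) *
          (∑ yb : Fin K, ∫ x,
            Lbar (f x) yb *
              ((1 / ((K : ℝ) - 1)) * ∑ y ∈ Finset.univ.filter (fun y => y ≠ yb), p x y) ∂ν)
        - M₁ + M₂ :=
  risk_from_complementary_labels_general ν K hK f L Lbar M₁ M₂ p hprob hintL hintLbar hM₁ hM₂
end

section
/- Let ℓ satisfy ℓ(z)+ℓ(−z)=1. Then for the one-versus-all losses L_OVA and L̄_OVA (with K classes), the combined symmetric conditions of Theorem 1 hold with M₁ = K and M₂ = 2, and hence E_{p(x,y)}[L_OVA(f(x),y)] = (K−1)·E_{p̄(x,ȳ)}[L̄_OVA(f(x),ȳ)] − K + 2 for any joint distribution p and its complementary distribution p̄. -/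
/-!
The one-versus-all losses satisfy the symmetric conditions `∑_ȳ L̄(f, ȳ) = M₁` with `M₁ = K` and
`L(f, y) + L̄(f, y) = M₂` with `M₂ = 2`, the latter because `ℓ(z) + ℓ(-z) = 1`. Together they give
`∑_{ȳ ≠ y} L̄(f, ȳ) = L(f, y) + M₁ - M₂`. Expanding `p̄` in the complementary risk and exchanging
the two label sums turns `(K - 1)` times that risk into `∑_y ∫ (∑_{ȳ ≠ y} L̄(f(x), ȳ)) p(x, y)`,
which is therefore the ordinary risk plus `M₁ - M₂`.
-/

open MeasureTheory Finset

section ComplementaryRisk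

variable {ι X : Type*} [Fintype ι] [DecidableEq ι] [MeasurableSpace X] {ν : Measure X}

theorem sum_filter_ne_eq_sub (f : ι → ℝ) (a : ι) :
    ∑ i ∈ univ.filter (fun i => i ≠ a), f i = ∑ i, f i - f a := by
  rw [filter_ne', sum_erase_eq_sub (mem_univ a)]

theorem card_filter_ne (a : ι) :
    ((univ.filter (fun i => i ≠ a)).card : ℝ) = Fintype.card ι - 1 := by
  rw [filter_ne', card_erase_of_mem (mem_univ a), card_univ,
    Nat.cast_sub (Fintype.card_pos_iff.mpr ⟨a⟩), Nat.cast_one]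

noncomputable def complementaryDensity (p : X → ι → ℝ) (x : X) (yb : ι) : ℝ :=
  (1 / ((Fintype.card ι : ℝ) - 1)) * ∑ y ∈ univ.filter (fun y => y ≠ yb), p x y

theorem sum_filter_ne_of_sum_eq_of_add_eq {L Lc : ι → ℝ} {M₁ M₂ : ℝ}
    (hsum : ∑ yb, Lc yb = M₁) (hadd : ∀ y, L y + Lc y = M₂) (y : ι) :
    ∑ yb ∈ univ.filter (fun yb => yb ≠ y), Lc yb = M₁ - M₂ + L y := by
  rw [sum_filter_ne_eq_sub, hsum, ← hadd y]
  ring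

theorem mul_integral_complementaryDensity (Lc : ι → X → ℝ) (p : X → ι → ℝ)
    (hι : Fintype.card ι ≠ 1) (hint : ∀ yb y, Integrable (fun x => Lc yb x * p x y) ν) (yb : ι) :
    ((Fintype.card ι : ℝ) - 1) * ∫ x, Lc yb x * complementaryDensity p x yb ∂ν
      = ∑ y ∈ univ.filter (fun y => y ≠ yb), ∫ x, Lc yb x * p x y ∂ν := by
  have hc : (Fintype.card ι : ℝ) - 1 ≠ 0 := sub_ne_zero.mpr (by exact_mod_cast hι)
  have hpull : (fun x => Lc yb x * complementaryDensity p x yb)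
      = fun x => (1 / ((Fintype.card ι : ℝ) - 1)) *
          ∑ y ∈ univ.filter (fun y => y ≠ yb), Lc yb x * p x y := by
    funext x
    rw [complementaryDensity, mul_left_comm, mul_sum]
  rw [hpull, integral_const_mul, integral_finsetSum _ fun y _ => hint yb y, ← mul_assoc,
    mul_one_div_cancel hc, one_mul]

theorem risk_eq_complementary_risk (L Lc : ι → X → ℝ) (p : X → ι → ℝ) {M₁ M₂ : ℝ}
    (hι : Fintype.card ι ≠ 1)
    (hsum : ∀ x, ∑ yb, Lc yb x = M₁) (hadd : ∀ y x, L y x + Lc y x = M₂)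
    (hprob : ∑ y, ∫ x, p x y ∂ν = 1)
    (hintL : ∀ y, Integrable (fun x => L y x * p x y) ν)
    (hintLc : ∀ yb y, Integrable (fun x => Lc yb x * p x y) ν) :
    ∑ y, ∫ x, L y x * p x y ∂ν
      = ((Fintype.card ι : ℝ) - 1) * ∑ yb, ∫ x, Lc yb x * complementaryDensity p x yb ∂ν
        - M₁ + M₂ := by
  have hinner : ∀ y, ∑ yb ∈ univ.filter (fun yb => yb ≠ y), ∫ x, Lc yb x * p x y ∂ν
      = ∫ x, L y x * p x y ∂ν + (M₁ - M₂) * ∫ x, p x y ∂ν := by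
    intro y
    have hdiff : (fun x => ∑ yb ∈ univ.filter (fun yb => yb ≠ y), Lc yb x * p x y - L y x * p x y)
        = fun x => (M₁ - M₂) * p x y := by
      funext x
      rw [← sum_mul, sum_filter_ne_of_sum_eq_of_add_eq (hsum x) (fun y => hadd y x)]
      ring
    have h := integral_sub
      (integrable_finsetSum (univ.filter fun yb => yb ≠ y) fun yb _ => hintLc yb y) (hintL y)
    rw [hdiff, integral_const_mul, integral_finsetSum _ fun yb _ => hintLc yb y] at h
    linarith
  have hswap : ∑ yb, ∑ y ∈ univ.filter (fun y => y ≠ yb), ∫ x, Lc yb x * p x y ∂ν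
      = ∑ y, ∑ yb ∈ univ.filter (fun yb => yb ≠ y), ∫ x, Lc yb x * p x y ∂ν :=
    sum_comm' fun _ _ => by simp [ne_comm]
  rw [mul_sum, sum_congr rfl fun yb _ => mul_integral_complementaryDensity Lc p hι hintLc yb,
    hswap, sum_congr rfl fun y _ => hinner y, sum_add_distrib, ← mul_sum, hprob]
  ring

end ComplementaryRisk

section OneVersusAll

variable {K : ℕ}

noncomputable def ovaLoss (ℓ : ℝ → ℝ) (f : Fin K → ℝ) (y : Fin K) : ℝ :=
  ℓ (f y) + (1 / ((K : ℝ) - 1)) * ∑ y' ∈ univ.filter (fun y' => y' ≠ y), ℓ (-f y')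

noncomputable def compOvaLoss (ℓ : ℝ → ℝ) (f : Fin K → ℝ) (yb : Fin K) : ℝ :=
  (1 / ((K : ℝ) - 1)) * ∑ y' ∈ univ.filter (fun y' => y' ≠ yb), ℓ (f y') + ℓ (-f yb)

variable {ℓ : ℝ → ℝ}

theorem ovaLoss_add_compOvaLoss (hK : K ≠ 1) (hsym : ∀ z, ℓ z + ℓ (-z) = 1)
    (f : Fin K → ℝ) (y : Fin K) : ovaLoss ℓ f y + compOvaLoss ℓ f y = 2 := by
  have hc : (K : ℝ) - 1 ≠ 0 := sub_ne_zero.mpr (by exact_mod_cast hK)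
  have hpairs : ∑ y' ∈ univ.filter (fun y' => y' ≠ y), (ℓ (-f y') + ℓ (f y')) = (K : ℝ) - 1 := by
    simp only [fun z => add_comm (ℓ (-z)) (ℓ z), hsym, sum_const, nsmul_eq_mul, mul_one]
    simpa using card_filter_ne y
  calc ovaLoss ℓ f y + compOvaLoss ℓ f y
      = (ℓ (f y) + ℓ (-f y)) + 1 / ((K : ℝ) - 1) *
          ∑ y' ∈ univ.filter (fun y' => y' ≠ y), (ℓ (-f y') + ℓ (f y')) := by
        rw [ovaLoss, compOvaLoss, sum_add_distrib]
        ring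
    _ = 2 := by
        rw [hsym, hpairs, one_div_mul_cancel hc]
        norm_num

theorem sum_compOvaLoss (hK : K ≠ 1) (hsym : ∀ z, ℓ z + ℓ (-z) = 1) (f : Fin K → ℝ) :
    ∑ yb, compOvaLoss ℓ f yb = K := by
  have hc : (K : ℝ) - 1 ≠ 0 := sub_ne_zero.mpr (by exact_mod_cast hK)
  have hneg : ∑ yb, ℓ (-f yb) = K - ∑ y, ℓ (f y) := by
    simp only [eq_sub_iff_add_eq, ← sum_add_distrib, fun z => add_comm (ℓ (-z)) (ℓ z), hsym]
    simp
  simp only [compOvaLoss, sum_add_distrib, ← mul_sum, sum_filter_ne_eq_sub, sum_sub_distrib,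
    sum_const, card_univ, Fintype.card_fin, nsmul_eq_mul, hneg]
  field_simp
  ring

end OneVersusAll

theorem OVA_risk_from_complementary_labels_general
    {X : Type*} [MeasurableSpace X] (ν : Measure X)
    (K : ℕ) (hK : 2 ≤ K)
    (ℓ : ℝ → ℝ) (hsym : ∀ z : ℝ, ℓ z + ℓ (-z) = 1)
    (g : Fin K → X → ℝ)
    (p : X → Fin K → ℝ)
    (hprob : ∑ y : Fin K, ∫ x, p x y ∂ν = 1)
    (hintL : ∀ y : Fin K, Integrable (fun x =>
      (ℓ (g y x) + (1 / ((K : ℝ) - 1)) *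
        ∑ y' ∈ Finset.univ.filter (fun y' => y' ≠ y), ℓ (-(g y' x))) * p x y) ν)
    (hintLbar : ∀ yb y : Fin K, Integrable (fun x =>
      ((1 / ((K : ℝ) - 1)) * ∑ y' ∈ Finset.univ.filter (fun y' => y' ≠ yb), ℓ (g y' x)
        + ℓ (-(g yb x))) * p x y) ν) :
    ∑ y : Fin K, ∫ x,
        (ℓ (g y x) + (1 / ((K : ℝ) - 1)) *
          ∑ y' ∈ Finset.univ.filter (fun y' => y' ≠ y), ℓ (-(g y' x))) * p x y ∂ν
      = ((K : ℝ) - 1) *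
          (∑ yb : Fin K, ∫ x,
            ((1 / ((K : ℝ) - 1)) * ∑ y' ∈ Finset.univ.filter (fun y' => y' ≠ yb), ℓ (g y' x)
              + ℓ (-(g yb x))) *
              ((1 / ((K : ℝ) - 1)) * ∑ y ∈ Finset.univ.filter (fun y => y ≠ yb), p x y) ∂ν)
        - K + 2 := by
  have hK1 : K ≠ 1 := by omega
  have h := risk_eq_complementary_risk (fun y x => ovaLoss ℓ (fun y' => g y' x) y)
    (fun yb x => compOvaLoss ℓ (fun y' => g y' x) yb) p (by simpa using hK1)
    (fun x => sum_compOvaLoss hK1 hsym _) (fun y x => ovaLoss_add_compOvaLoss hK1 hsym _ y)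
    hprob hintL hintLbar
  simp only [complementaryDensity, Fintype.card_fin] at h
  exact h

/-- For a symmetric binary loss, the OVA risk equals `(K−1)` times the complementary OVA risk
minus `K` plus `2`. -/
theorem OVA_risk_from_complementary_labels
    {X : Type*} [MeasurableSpace X] (ν : Measure X)
    (K : ℕ) (hK : 2 ≤ K)
    (ℓ : ℝ → ℝ) (hsym : ∀ z : ℝ, ℓ z + ℓ (-z) = 1)
    (g : Fin K → X → ℝ)
    (p : X → Fin K → ℝ)
    (hp : ∀ x y, 0 ≤ p x y)
    (hprob : ∑ y : Fin K, ∫ x, p x y ∂ν = 1)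
    (hintL : ∀ y : Fin K, Integrable (fun x =>
      (ℓ (g y x) + (1 / ((K : ℝ) - 1)) *
        ∑ y' ∈ Finset.univ.filter (fun y' => y' ≠ y), ℓ (-(g y' x))) * p x y) ν)
    (hintLbar : ∀ yb y : Fin K, Integrable (fun x =>
      ((1 / ((K : ℝ) - 1)) * ∑ y' ∈ Finset.univ.filter (fun y' => y' ≠ yb), ℓ (g y' x)
        + ℓ (-(g yb x))) * p x y) ν) :
    ∑ y : Fin K, ∫ x,
        (ℓ (g y x) + (1 / ((K : ℝ) - 1)) *
          ∑ y' ∈ Finset.univ.filter (fun y' => y' ≠ y), ℓ (-(g y' x))) * p x y ∂ν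
      = ((K : ℝ) - 1) *
          (∑ yb : Fin K, ∫ x,
            ((1 / ((K : ℝ) - 1)) * ∑ y' ∈ Finset.univ.filter (fun y' => y' ≠ yb), ℓ (g y' x)
              + ℓ (-(g yb x))) *
              ((1 / ((K : ℝ) - 1)) * ∑ y ∈ Finset.univ.filter (fun y => y ≠ yb), p x y) ∂ν)
        - K + 2 :=
  OVA_risk_from_complementary_labels_general ν K hK ℓ hsym g p hprob hintL hintLbar
end

section
/- Let (x_1,ȳ_1),…,(x_n,ȳ_n) be i.i.d. samples from p̄, and let L̄ satisfy the two symmetry conditions of Theorem 1 with constants M₁, M₂. Then the empirical estimator R̂(f) = (K−1)/n · Σ_{i=1}^n L̄(f(x_i), ȳ_i) − M₁ + M₂ is an unbiased estimator of the classification risk R(f) = E_{p(x,y)}[L(f(x),y)], i.e., E[R̂(f)] = R(f). -/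
/-!
Disintegrate both measures along the label: with `P_y` the measure `s ↦ P (s ×ˢ {y})` on `X`,
the hypothesis on `P̄` says `P̄_ȳ = (K - 1)⁻¹ • ∑_{y ≠ ȳ} P_y`. Exchanging the two finite sums
turns `(K - 1) E_P̄[L̄]` into `E_P[∑_{ȳ ≠ y} L̄(f x, ȳ)] = M₁ - E_P[L̄]`, and
`M₂ - E_P[L̄] = E_P[L]`.
The sample mean of an i.i.d. sample from `P̄` has expectation `E_P̄[L̄]`.
-/

open MeasureTheory Finset ENNReal

namespace MeasureTheory.Measure

variable {X ι : Type*} [MeasurableSpace X] [MeasurableSpace ι]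

noncomputable def labelSlice (μ : Measure (X × ι)) (y : ι) : Measure X :=
  (μ.restrict (Prod.snd ⁻¹' {y})).map Prod.fst

instance isFiniteMeasure_labelSlice (μ : Measure (X × ι)) [IsFiniteMeasure μ] (y : ι) :
    IsFiniteMeasure (μ.labelSlice y) := by
  unfold labelSlice; infer_instance

theorem labelSlice_apply (μ : Measure (X × ι)) (y : ι) {s : Set X} (hs : MeasurableSet s) :
    μ.labelSlice y s = μ (s ×ˢ {y}) := by
  rw [labelSlice, map_apply measurable_fst hs, restrict_apply (measurable_fst hs), Set.prod_eq]

theorem integral_labelSlice {E : Type*} [NormedAddCommGroup E] [NormedSpace ℝ E]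
    (μ : Measure (X × ι)) (y : ι) {g : X → E} (hg : StronglyMeasurable g) :
    ∫ x, g x ∂μ.labelSlice y = ∫ q in Prod.snd ⁻¹' {y}, g q.1 ∂μ :=
  integral_map measurable_fst.aemeasurable hg.aestronglyMeasurable

variable [Fintype ι]

theorem integral_eq_sum_integral_labelSlice [MeasurableSingletonClass ι] {E : Type*}
    [NormedAddCommGroup E] [NormedSpace ℝ E] (μ : Measure (X × ι)) {g : X × ι → E}
    (hg : StronglyMeasurable g) (hint : Integrable g μ) :
    ∫ q, g q ∂μ = ∑ y, ∫ x, g (x, y) ∂μ.labelSlice y := by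
  have hfibre (y : ι) : MeasurableSet (Prod.snd ⁻¹' {y} : Set (X × ι)) :=
    measurable_snd (measurableSet_singleton y)
  calc ∫ q, g q ∂μ = ∫ q in ⋃ y, Prod.snd ⁻¹' {y}, g q ∂μ := by
        rw [← Set.preimage_iUnion, Set.iUnion_singleton_eq_range, Set.range_id',
          Set.preimage_univ, setIntegral_univ]
    _ = ∑ y, ∫ q in Prod.snd ⁻¹' {y}, g q ∂μ :=
        integral_iUnion_fintype hfibre
          (fun y y' hne => (Set.disjoint_singleton.2 hne).preimage _) fun _ => hint.integrableOn
    _ = ∑ y, ∫ x, g (x, y) ∂μ.labelSlice y := by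
        refine Finset.sum_congr rfl fun y _ => ?_
        rw [integral_labelSlice μ y (g := fun x => g (x, y))
          (hg.comp_measurable measurable_prodMk_right)]
        refine setIntegral_congr_fun (hfibre y) fun q hq => ?_
        rw [Set.mem_preimage, Set.mem_singleton_iff] at hq
        rw [← hq]

variable [DecidableEq ι]

theorem labelSlice_eq_smul_sum_of_complementary {P Pbar : Measure (X × ι)} {c : ℝ≥0∞}
    (hPbar : ∀ s : Set X, MeasurableSet s → ∀ yb : ι,
      Pbar (s ×ˢ {yb}) = c * ∑ y ∈ univ.filter (fun y => y ≠ yb), P (s ×ˢ {y}))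
    (yb : ι) :
    Pbar.labelSlice yb = c • ∑ y ∈ univ.erase yb, P.labelSlice y := by
  ext s hs
  rw [labelSlice_apply _ _ hs, hPbar s hs yb, smul_apply, finsetSum_apply, smul_eq_mul,
    filter_ne']
  simp only [labelSlice_apply _ _ hs]

theorem integral_of_complementary [MeasurableSingletonClass ι] {P Pbar : Measure (X × ι)}
    [IsFiniteMeasure P] [IsFiniteMeasure Pbar] {c : ℝ≥0∞}
    (hPbar : ∀ s : Set X, MeasurableSet s → ∀ yb : ι,
      Pbar (s ×ˢ {yb}) = c * ∑ y ∈ univ.filter (fun y => y ≠ yb), P (s ×ˢ {y}))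
    {g : X × ι → ℝ} (hg : Measurable g) {C : ℝ} (hC : ∀ q, |g q| ≤ C) :
    ∫ q, g q ∂Pbar = c.toReal * ∫ q, (∑ yb, g (q.1, yb) - g q) ∂P := by
  have hint_g {μ : Measure (X × ι)} [IsFiniteMeasure μ] : Integrable g μ :=
    .of_bound hg.aestronglyMeasurable C (ae_of_all _ hC)
  have hint {ν : Measure X} [IsFiniteMeasure ν] (yb : ι) : Integrable (fun x => g (x, yb)) ν :=
    .of_bound (hg.comp measurable_prodMk_right).aestronglyMeasurable C
      (ae_of_all _ fun x => hC (x, yb))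
  have hmeas_compl : Measurable fun q : X × ι => ∑ yb, g (q.1, yb) - g q :=
    (Finset.measurable_sum _ fun yb _ => hg.comp (measurable_fst.prodMk measurable_const)).sub hg
  have hint_compl : Integrable (fun q : X × ι => ∑ yb, g (q.1, yb) - g q) P :=
    (integrable_finsetSum _ fun yb _ => (hint yb).comp_measurable measurable_fst).sub hint_g
  calc ∫ q, g q ∂Pbar = ∑ yb, ∫ x, g (x, yb) ∂Pbar.labelSlice yb :=
        integral_eq_sum_integral_labelSlice Pbar hg.stronglyMeasurable hint_g
    _ = ∑ yb, c.toReal * ∑ y ∈ univ.erase yb, ∫ x, g (x, yb) ∂P.labelSlice y := by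
        refine Finset.sum_congr rfl fun yb _ => ?_
        rw [labelSlice_eq_smul_sum_of_complementary hPbar, integral_smul_measure,
          integral_finsetSum_measure fun y _ => hint yb, smul_eq_mul]
    _ = c.toReal * ∑ y, ∫ x, ∑ yb ∈ univ.erase y, g (x, yb) ∂P.labelSlice y := by
        rw [← Finset.mul_sum, Finset.sum_comm' (t' := univ) (s' := fun y => univ.erase y)
          (by simp [and_comm, eq_comm])]
        congr 1
        exact Finset.sum_congr rfl fun y _ => (integral_finsetSum _ fun yb _ => hint yb).symm
    _ = c.toReal * ∫ q, (∑ yb, g (q.1, yb) - g q) ∂P := by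
        simp only [sum_erase_eq_sub (mem_univ _)]
        rw [integral_eq_sum_integral_labelSlice P hmeas_compl.stronglyMeasurable hint_compl]

end MeasureTheory.Measure

namespace MeasureTheory

variable {α : Type*} [MeasurableSpace α] (μ : Measure α) [IsProbabilityMeasure μ]

theorem integral_sum_comp_eval_pi {ι E : Type*} [Fintype ι] [NormedAddCommGroup E]
    [NormedSpace ℝ E] {g : α → E} (hg : Integrable g μ) :
    ∫ ω, ∑ i, g (ω i) ∂Measure.pi (fun _ : ι => μ) = Fintype.card ι • ∫ a, g a ∂μ := by
  rw [integral_finsetSum _ fun i _ => integrable_comp_eval hg]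
  simp only [integral_comp_eval (μ := fun _ : ι => μ) hg.aestronglyMeasurable, sum_const,
    card_univ]

theorem integral_div_mul_sum_sub_add_pi {g : α → ℝ} (hg : Integrable g μ) {n : ℕ}
    (hn : n ≠ 0) (a b c : ℝ) :
    ∫ ω : Fin n → α, (a / n * ∑ i, g (ω i) - b + c) ∂Measure.pi (fun _ => μ)
      = a * ∫ x, g x ∂μ - b + c := by
  have hint : Integrable (fun ω : Fin n → α => a / n * ∑ i, g (ω i)) (Measure.pi fun _ => μ) :=
    (integrable_finsetSum _ fun i _ => integrable_comp_eval hg).const_mul _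
  have hint_sub : Integrable (fun ω : Fin n → α => a / n * ∑ i, g (ω i) - b)
      (Measure.pi fun _ => μ) :=
    hint.sub (integrable_const b)
  rw [integral_add hint_sub (integrable_const c), integral_sub hint (integrable_const b),
    integral_const_mul, integral_sum_comp_eval_pi μ hg, Fintype.card_fin, nsmul_eq_mul,
    integral_const, integral_const, probReal_univ, one_smul, one_smul]
  field_simp

end MeasureTheory

theorem unbiased_empirical_complementary_risk_general
    {X Y : Type*} [MeasurableSpace X]
    (K : ℕ) (hK : 2 ≤ K) (n : ℕ) (hn : 0 < n)
    (P Pbar : Measure (X × Fin K)) [IsProbabilityMeasure P] [IsProbabilityMeasure Pbar]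
    (hPbar : ∀ (s : Set X), MeasurableSet s → ∀ yb : Fin K,
      Pbar (s ×ˢ ({yb} : Set (Fin K))) =
        (1 / ((K : ℝ≥0∞) - 1)) *
          ∑ y ∈ Finset.univ.filter (fun y => y ≠ yb), P (s ×ˢ ({y} : Set (Fin K))))
    (f : X → Y) (L Lbar : Y → Fin K → ℝ) (M₁ M₂ : ℝ)
    (hmeasLbar : Measurable fun q : X × Fin K => Lbar (f q.1) q.2)
    (hbddLbar : ∃ C : ℝ, ∀ q : X × Fin K, |Lbar (f q.1) q.2| ≤ C)
    (hM₁ : ∀ x : X, ∑ yb : Fin K, Lbar (f x) yb = M₁)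
    (hM₂ : ∀ (x : X) (y : Fin K), Lbar (f x) y + L (f x) y = M₂) :
    ∫ ω : Fin n → X × Fin K,
        (((K : ℝ) - 1) / n * ∑ i : Fin n, Lbar (f (ω i).1) (ω i).2 - M₁ + M₂)
        ∂(Measure.pi fun _ : Fin n => Pbar)
      = ∫ q, L (f q.1) q.2 ∂P := by
  obtain ⟨C, hC⟩ := hbddLbar
  set g : X × Fin K → ℝ := fun q => Lbar (f q.1) q.2
  have hint {μ : Measure (X × Fin K)} [IsFiniteMeasure μ] : Integrable g μ :=
    .of_bound hmeasLbar.aestronglyMeasurable C (ae_of_all _ hC)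
  have hK' : (1 : ℝ) < K := by exact_mod_cast hK
  have hc : (1 / ((K : ℝ≥0∞) - 1)).toReal = ((K : ℝ) - 1)⁻¹ := by
    rw [one_div, toReal_inv, toReal_sub_of_le (by exact_mod_cast hK.trans' one_le_two) (by simp)]
    simp
  have hPbar_g : ∫ q, g q ∂Pbar = ((K : ℝ) - 1)⁻¹ * (M₁ - ∫ q, g q ∂P) := by
    rw [Measure.integral_of_complementary hPbar hmeasLbar hC, hc]
    simp only [g, hM₁]
    rw [integral_sub (integrable_const M₁) hint, integral_const, probReal_univ, one_smul]
  have hP_L : ∫ q, L (f q.1) q.2 ∂P = M₂ - ∫ q, g q ∂P := by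
    have hL (q : X × Fin K) : L (f q.1) q.2 = M₂ - g q := eq_sub_of_add_eq' (hM₂ q.1 q.2)
    simp only [hL]
    rw [integral_sub (integrable_const M₂) hint, integral_const, probReal_univ, one_smul]
  refine (integral_div_mul_sum_sub_add_pi Pbar hint hn.ne' _ M₁ M₂).trans ?_
  rw [hPbar_g, hP_L, mul_inv_cancel_left₀ (sub_ne_zero.2 hK'.ne')]
  ring

/-- The empirical estimator `R̂(f) = (K−1)/n · Σ_i L̄(f(x_i),ȳ_i) − M₁ + M₂` built from an
i.i.d. sample from the complementary distribution `P̄` is an unbiased estimator of the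
classification risk `R(f) = E_P[L(f(x),y)]`. -/
theorem unbiased_empirical_complementary_risk
    {X Y : Type*} [MeasurableSpace X]
    (K : ℕ) (hK : 2 ≤ K) (n : ℕ) (hn : 0 < n)
    (P Pbar : Measure (X × Fin K)) [IsProbabilityMeasure P] [IsProbabilityMeasure Pbar]
    (hPbar : ∀ (s : Set X), MeasurableSet s → ∀ yb : Fin K,
      Pbar (s ×ˢ ({yb} : Set (Fin K))) =
        (1 / ((K : ℝ≥0∞) - 1)) *
          ∑ y ∈ Finset.univ.filter (fun y => y ≠ yb), P (s ×ˢ ({y} : Set (Fin K))))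
    (f : X → Y) (L Lbar : Y → Fin K → ℝ) (M₁ M₂ : ℝ)
    (hmeasL : Measurable fun q : X × Fin K => L (f q.1) q.2)
    (hmeasLbar : Measurable fun q : X × Fin K => Lbar (f q.1) q.2)
    (hbddL : ∃ C : ℝ, ∀ q : X × Fin K, |L (f q.1) q.2| ≤ C)
    (hbddLbar : ∃ C : ℝ, ∀ q : X × Fin K, |Lbar (f q.1) q.2| ≤ C)
    (hM₁ : ∀ x : X, ∑ yb : Fin K, Lbar (f x) yb = M₁)
    (hM₂ : ∀ (x : X) (y : Fin K), Lbar (f x) y + L (f x) y = M₂) :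
    ∫ ω : Fin n → X × Fin K,
        (((K : ℝ) - 1) / n * ∑ i : Fin n, Lbar (f (ω i).1) (ω i).2 - M₁ + M₂)
        ∂(Measure.pi fun _ : Fin n => Pbar)
      = ∫ q, L (f q.1) q.2 ∂P :=
  unbiased_empirical_complementary_risk_general K hK n hn P Pbar hPbar f L Lbar M₁ M₂ hmeasLbar
    hbddLbar hM₁ hM₂
end
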